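/- Let L be a bounded lattice equipped with unary operations ¬, □, ◇ where ¬ is dually self-adjoint (a ≤ ¬b implies b ≤ ¬a) with ¬1 = 0, □ is multiplicative (□(a ∧ b) = □a ∧ □b and □1 = 1), ◇ is additive (◇(a ∨ b) = ◇a ∨ ◇b and ◇0 = 0), and ◇¬a ≤ ¬□a for all a ∈ L. Define X = {(F, I) : F is a filter in L, I is an ideal in L, and {¬a : a ∈ F} ⊆ I}, with (F,I) ◁ (F',I') iff I ∩ F' = ∅; (F,I) R (F',I') iff for all a ∈ L, (□a ∈ F implies a ∈ F') and (◇a ∈ I implies a ∈ I'); and Q = R. Then: (i) (X, ◁, R, Q) is a unified (R = Q) additive modal frame with ◁ pseudo-symmetric; (ii) the map a ↦ â = {(F,I) ∈ X : a ∈ F} is an injective bounded-lattice homomorphism into the complete lattice of c_◁-fixpoints of (X, ◁) satisfying (¬a)^ = ¬_◁(â), (□a)^ = □_R(â), and (◇a)^ = ◇_Q(â), and its image is exactly the set of c_◁-fixpoints that are compact open in the topology on X generated by {â : a ∈ L}; (iii) if a ∧ ¬a = 0 for all a ∈ L, then ◁ is pseudo-reflexive; (iv) if ¬◇a ≤ □¬a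 for all a ∈ L, then the frame is negative. -/

import Mathlib

/-- The closure operator `c_◁` of a relational frame `(X, ◁)`, where `lt y x` means `y ◁ x`. -/
def clOp {X : Type*} (lt : X → X → Prop) (A : Set X) : Set X :=
  {x | ∀ y, lt y x → ∃ z, lt y z ∧ z ∈ A}

/-- The negation operation `¬_◁` of a relational frame. -/
def ngOp {X : Type*} (lt : X → X → Prop) (A : Set X) : Set X :=
  {x | ∀ y, lt y x → y ∉ A}

/-- The necessity operation `□_R`. -/
def boxOp {X : Type*} (R : X → X → Prop) (A : Set X) : Set X :=
  {x | ∀ y, R x y → y ∈ A}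

/-- The possibility operation `◇_Q`. -/
def diaOp {X : Type*} (lt Q : X → X → Prop) (A : Set X) : Set X :=
  {x | ∀ x', lt x' x → ∃ y' y, Q x' y' ∧ lt y' y ∧ y ∈ A}

/-- The defining condition of a modal frame (interaction of `R` and `◁`). -/
def IsModalFrame {X : Type*} (lt R : X → X → Prop) : Prop :=
  ∀ x y z, R x y → lt z y →
    ∃ x', lt x' x ∧ ∀ x'', lt x' x'' → ∃ y'', R x'' y'' ∧ lt z y''

/-- The additivity condition of a modal frame (interaction of `Q` and `◁`). -/
def IsAdditiveFrame {X : Type*} (lt Q : X → X → Prop) : Prop :=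
  ∀ x y z, Q x y → lt y z →
    ∃ x', lt x x' ∧ ∀ x'', lt x'' x' → ∃ y'', Q x'' y'' ∧ lt y'' z

/-- The negativity condition of a modal frame. -/
def IsNegativeFrame {X : Type*} (lt R Q : X → X → Prop) : Prop :=
  ∀ x y z, R x y → lt z y →
    ∃ x', lt x' x ∧ ∀ x'', lt x'' x' → ∃ y'', Q x'' y'' ∧ lt y'' z

/-- `z` pre-refines `x`. -/
def PreRefines {X : Type*} (lt : X → X → Prop) (z x : X) : Prop :=
  ∀ w, lt w z → lt w x

/-- `◁` is pseudo-reflexive. -/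
def PseudoRefl {X : Type*} (lt : X → X → Prop) : Prop :=
  ∀ x, (∃ y, lt y x) → ∃ z, lt z x ∧ PreRefines lt z x

/-- `◁` is pseudo-symmetric. -/
def PseudoSymm {X : Type*} (lt : X → X → Prop) : Prop :=
  ∀ x y, lt y x → ∃ z, lt z y ∧ PreRefines lt z x

/-- A filter in a bounded lattice: nonempty, upward closed, closed under binary meets. -/
def IsFilt {L : Type*} [Lattice L] [BoundedOrder L] (F : Set L) : Prop :=
  F.Nonempty ∧ (∀ a b : L, a ∈ F → a ≤ b → b ∈ F) ∧ (∀ a b : L, a ∈ F → b ∈ F → a ⊓ b ∈ F)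

/-- An ideal in a bounded lattice: nonempty, downward closed, closed under binary joins. -/
def IsIdl {L : Type*} [Lattice L] [BoundedOrder L] (I : Set L) : Prop :=
  I.Nonempty ∧ (∀ a b : L, a ∈ I → b ≤ a → b ∈ I) ∧ (∀ a b : L, a ∈ I → b ∈ I → a ⊔ b ∈ I)

/-- The set of filter-ideal pairs `(F,I)` with `{¬a : a ∈ F} ⊆ I`. -/
def FIX {L : Type*} [Lattice L] [BoundedOrder L] (neg : L → L) : Type _ :=
  {p : Set L × Set L // IsFilt p.1 ∧ IsIdl p.2 ∧ ∀ a ∈ p.1, neg a ∈ p.2}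

/-- `(F,I) ◁ (F',I')` iff `I ∩ F' = ∅`. -/
def fiLt {L : Type*} [Lattice L] [BoundedOrder L] (neg : L → L) (x y : FIX neg) : Prop :=
  x.1.2 ∩ y.1.1 = ∅

/-- The map `a ↦ â = {(F,I) : a ∈ F}`. -/
def fhat {L : Type*} [Lattice L] [BoundedOrder L] (neg : L → L) (a : L) : Set (FIX neg) :=
  {x | a ∈ x.1.1}

/-- The unified relation: `(F,I) R (F',I')` iff for all `a`,
`□a ∈ F` implies `a ∈ F'`, and `◇a ∈ I` implies `a ∈ I'`. -/
def fiR2 {L : Type*} [Lattice L] [BoundedOrder L] (neg Box Dia : L → L)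
    (x y : FIX neg) : Prop :=
  ∀ a : L, (Box a ∈ x.1.1 → a ∈ y.1.1) ∧ (Dia a ∈ x.1.2 → a ∈ y.1.2)

/-! Every claim is witnessed by a few explicit filter–ideal pairs. The principal pair
`(↑a, ↓¬a)` is a `◁`-successor of every pair whose ideal omits `a`; since `¬⊤ = ⊥`, the pair
`(↑⊤, ↓a)` has as `◁`-successors exactly the pairs whose filter omits `a`, which makes each `â` a
`c_◁`-fixpoint and gives `(⋁ s)^ = c_◁ (⋃ a ∈ s, â)`. The pair `(F, ↓¬F)` pre-refines `(F, I)`, and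
the canonical successor `(□⁻¹F, ◇⁻¹I)` realizes `□` and `◇`. Finally each `â` is compact, being
the set of generalizations of the principal pair of `a`, so the compact opens are the finite
unions of basic sets `â`, and the `c_◁`-fixpoints among them are exactly the sets `(⋁ s)^`. -/

open Set

def IsDuallySelfAdjoint {L : Type*} [LE L] (neg : L → L) : Prop :=
  ∀ a b : L, a ≤ neg b → b ≤ neg a

theorem IsDuallySelfAdjoint.antitone {L : Type*} [Preorder L] {neg : L → L}
    (hneg : IsDuallySelfAdjoint neg) : Antitone neg :=
  fun a b hab => hneg a (neg b) (hab.trans (hneg (neg b) b le_rfl))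

section FiltersAndIdeals

variable {L L' : Type*} [Lattice L] [BoundedOrder L] [Lattice L'] [BoundedOrder L']
  {F I : Set L} {a b : L}

theorem IsFilt.mem_of_le (hF : IsFilt F) (ha : a ∈ F) (hab : a ≤ b) : b ∈ F :=
  hF.2.1 a b ha hab

theorem IsFilt.inf_mem (hF : IsFilt F) (ha : a ∈ F) (hb : b ∈ F) : a ⊓ b ∈ F :=
  hF.2.2 a b ha hb

theorem IsFilt.top_mem (hF : IsFilt F) : ⊤ ∈ F :=
  let ⟨_, ha⟩ := hF.1
  hF.mem_of_le ha le_top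

theorem IsIdl.mem_of_le (hI : IsIdl I) (hb : b ∈ I) (hab : a ≤ b) : a ∈ I :=
  hI.2.1 b a hb hab

theorem IsIdl.sup_mem (hI : IsIdl I) (ha : a ∈ I) (hb : b ∈ I) : a ⊔ b ∈ I :=
  hI.2.2 a b ha hb

theorem IsIdl.bot_mem (hI : IsIdl I) : ⊥ ∈ I :=
  let ⟨_, ha⟩ := hI.1
  hI.mem_of_le ha bot_le

theorem IsIdl.finset_sup_mem (hI : IsIdl I) {ι : Type*} {s : Finset ι} {f : ι → L}
    (h : ∀ i ∈ s, f i ∈ I) : s.sup f ∈ I :=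
  Finset.sup_mem I hI.bot_mem (fun _ ha _ hb => hI.sup_mem ha hb) s f h

theorem isFilt_Ici (a : L) : IsFilt (Ici a) :=
  ⟨⟨a, le_rfl⟩, fun _ _ => le_trans, fun _ _ => le_inf⟩

theorem isIdl_Iic (a : L) : IsIdl (Iic a) :=
  ⟨⟨a, le_rfl⟩, fun _ _ h h' => le_trans h' h, fun _ _ => sup_le⟩

theorem IsFilt.preimage (f : InfTopHom L L') {F : Set L'} (hF : IsFilt F) : IsFilt (f ⁻¹' F) :=
  ⟨⟨⊤, by simpa using hF.top_mem⟩, fun _ _ ha hab => hF.mem_of_le ha (OrderHomClass.mono f hab),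
    fun _ _ ha hb => by simpa [mem_preimage, map_inf] using hF.inf_mem ha hb⟩

theorem IsIdl.preimage (f : SupBotHom L L') {I : Set L'} (hI : IsIdl I) : IsIdl (f ⁻¹' I) :=
  ⟨⟨⊥, by simpa using hI.bot_mem⟩, fun _ _ ha hab => hI.mem_of_le ha (OrderHomClass.mono f hab),
    fun _ _ ha hb => by simpa [mem_preimage, map_sup] using hI.sup_mem ha hb⟩

theorem IsFilt.upperClosure_image {f : L → L} (hf : Monotone f) (hF : IsFilt F) :
    IsFilt {c | ∃ b ∈ F, f b ≤ c} :=
  ⟨⟨f ⊤, ⊤, hF.top_mem, le_rfl⟩, fun _ _ ⟨b, hb, hba⟩ h => ⟨b, hb, hba.trans h⟩,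
    fun _ _ ⟨b, hb, hba⟩ ⟨b', hb', hba'⟩ =>
      ⟨b ⊓ b', hF.inf_mem hb hb',
        le_inf ((hf inf_le_left).trans hba) ((hf inf_le_right).trans hba')⟩⟩

theorem IsIdl.lowerClosure_image {f : L → L} (hf : Monotone f) (hI : IsIdl I) :
    IsIdl {c | ∃ b ∈ I, c ≤ f b} :=
  ⟨⟨f ⊥, ⊥, hI.bot_mem, le_rfl⟩, fun _ _ ⟨b, hb, hab⟩ h => ⟨b, hb, h.trans hab⟩,
    fun _ _ ⟨b, hb, hab⟩ ⟨b', hb', hab'⟩ =>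
      ⟨b ⊔ b', hI.sup_mem hb hb',
        sup_le (hab.trans (hf le_sup_left)) (hab'.trans (hf le_sup_right))⟩⟩

theorem IsFilt.lowerClosure_image_of_antitone {f : L → L} (hf : Antitone f) (hF : IsFilt F) :
    IsIdl {d | ∃ c ∈ F, d ≤ f c} :=
  ⟨⟨f ⊤, ⊤, hF.top_mem, le_rfl⟩, fun _ _ ⟨c, hc, hac⟩ h => ⟨c, hc, h.trans hac⟩,
    fun _ _ ⟨c, hc, hac⟩ ⟨c', hc', hac'⟩ =>
      ⟨c ⊓ c', hF.inf_mem hc hc',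
        sup_le (hac.trans (hf inf_le_left)) (hac'.trans (hf inf_le_right))⟩⟩

end FiltersAndIdeals

theorem subset_clOp {X : Type*} (lt : X → X → Prop) (A : Set X) : A ⊆ clOp lt A :=
  fun x hx _ hy => ⟨x, hy, hx⟩

theorem clOp_mono {X : Type*} (lt : X → X → Prop) {A B : Set X} (h : A ⊆ B) :
    clOp lt A ⊆ clOp lt B :=
  fun _ hx y hy => let ⟨z, hyz, hz⟩ := hx y hy; ⟨z, hyz, h hz⟩

namespace FIX

variable {L : Type*} [Lattice L] [BoundedOrder L] {neg : L → L}

theorem isFilt (x : FIX neg) : IsFilt x.1.1 := x.2.1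

theorem isIdl (x : FIX neg) : IsIdl x.1.2 := x.2.2.1

theorem neg_mem (x : FIX neg) {a : L} (ha : a ∈ x.1.1) : neg a ∈ x.1.2 := x.2.2.2 a ha

end FIX

section CanonicalFrame

variable {L : Type*} [Lattice L] [BoundedOrder L] {neg : L → L} {a b : L}

theorem fiLt_iff {x y : FIX neg} : fiLt neg x y ↔ ∀ c ∈ x.1.2, c ∉ y.1.1 := by
  simp [fiLt, eq_empty_iff_forall_notMem]

def negPt (hneg : IsDuallySelfAdjoint neg) (F : Set L) (hF : IsFilt F) : FIX neg :=
  ⟨(F, {d | ∃ c ∈ F, d ≤ neg c}), hF,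
    hF.lowerClosure_image_of_antitone hneg.antitone,
    fun a ha => ⟨a, ha, le_rfl⟩⟩

def topPt (hneg1 : neg ⊤ = ⊥) (I : Set L) (hI : IsIdl I) : FIX neg :=
  ⟨(Ici ⊤, I), isFilt_Ici ⊤, hI, fun a ha => by rw [top_le_iff.1 ha, hneg1]; exact hI.bot_mem⟩

/-- The principal pair `(↑a, ↓¬a)`. -/
abbrev principalPt (hneg : IsDuallySelfAdjoint neg) (a : L) : FIX neg :=
  negPt hneg (Ici a) (isFilt_Ici a)

theorem fiLt_principalPt_iff (hneg : IsDuallySelfAdjoint neg) {y : FIX neg} :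
    fiLt neg y (principalPt hneg a) ↔ a ∉ y.1.2 :=
  fiLt_iff.trans ⟨fun h ha => h a ha le_rfl, fun ha _ hc hac => ha (y.isIdl.mem_of_le hc hac)⟩

theorem principalPt_fiLt_iff (hneg : IsDuallySelfAdjoint neg) {x : FIX neg} :
    fiLt neg (principalPt hneg a) x ↔ neg a ∉ x.1.1 := by
  refine fiLt_iff.trans ⟨fun h ha => h (neg a) ⟨a, le_rfl, le_rfl⟩ ha, ?_⟩
  rintro ha d ⟨c, hac, hdc⟩ hd
  exact ha (x.isFilt.mem_of_le hd (hdc.trans (hneg.antitone hac)))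

theorem principalPt_mem_fhat_iff (hneg : IsDuallySelfAdjoint neg) :
    principalPt hneg a ∈ fhat neg b ↔ a ≤ b :=
  Iff.rfl

theorem topPt_Iic_fiLt_iff (hneg1 : neg ⊤ = ⊥) {x : FIX neg} :
    fiLt neg (topPt hneg1 (Iic a) (isIdl_Iic a)) x ↔ a ∉ x.1.1 :=
  fiLt_iff.trans ⟨fun h ha => h a le_rfl ha, fun ha _ hca hc => ha (x.isFilt.mem_of_le hc hca)⟩

theorem preRefines_negPt (hneg : IsDuallySelfAdjoint neg) (x : FIX neg) :
    PreRefines (fiLt neg) (negPt hneg x.1.1 x.isFilt) x :=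
  fun _ h => h

theorem exists_fiLt_mem_fhat (hneg : IsDuallySelfAdjoint neg) {y : FIX neg} (ha : a ∉ y.1.2) :
    ∃ z, fiLt neg y z ∧ z ∈ fhat neg a :=
  ⟨principalPt hneg a, (fiLt_principalPt_iff hneg).2 ha, le_rfl⟩

theorem pseudoSymm_fiLt (hneg : IsDuallySelfAdjoint neg) : PseudoSymm (fiLt neg) := by
  intro x y hyx
  refine ⟨negPt hneg x.1.1 x.isFilt, fiLt_iff.2 ?_, preRefines_negPt hneg x⟩
  rintro d ⟨c, hc, hdc⟩ hd
  exact fiLt_iff.1 hyx c (y.isIdl.mem_of_le (y.neg_mem hd) (hneg d c hdc)) hc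

theorem pseudoRefl_fiLt (hneg : IsDuallySelfAdjoint neg) (hcompl : ∀ a : L, a ⊓ neg a = ⊥) :
    PseudoRefl (fiLt neg) := by
  rintro x ⟨y, hyx⟩
  have hbot : (⊥ : L) ∉ x.1.1 := fiLt_iff.1 hyx ⊥ y.isIdl.bot_mem
  refine ⟨negPt hneg x.1.1 x.isFilt, fiLt_iff.2 ?_, preRefines_negPt hneg x⟩
  rintro d ⟨c, hc, hdc⟩ hd
  have hcd : c ⊓ d = ⊥ := eq_bot_iff.2 ((inf_le_inf_left c hdc).trans (hcompl c).le)
  exact hbot (hcd ▸ x.isFilt.inf_mem hc hd)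

theorem fhat_subset_fhat_iff (hneg : IsDuallySelfAdjoint neg) :
    fhat neg a ⊆ fhat neg b ↔ a ≤ b :=
  ⟨fun h => (principalPt_mem_fhat_iff hneg).1 (h ((principalPt_mem_fhat_iff hneg).2 le_rfl)),
    fun hab x hx => x.isFilt.mem_of_le hx hab⟩

theorem fhat_injective (hneg : IsDuallySelfAdjoint neg) : Function.Injective (fhat neg) :=
  fun _ _ h =>
    le_antisymm ((fhat_subset_fhat_iff hneg).1 h.subset) ((fhat_subset_fhat_iff hneg).1 h.symm.subset)

theorem fhat_inf (a b : L) : fhat neg (a ⊓ b) = fhat neg a ∩ fhat neg b := by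
  ext x
  exact ⟨fun h => ⟨x.isFilt.mem_of_le h inf_le_left, x.isFilt.mem_of_le h inf_le_right⟩,
    fun h => x.isFilt.inf_mem h.1 h.2⟩

theorem fhat_top : fhat neg (⊤ : L) = univ :=
  eq_univ_of_forall fun x => x.isFilt.top_mem

theorem clOp_fhat (hneg1 : neg ⊤ = ⊥) (a : L) : clOp (fiLt neg) (fhat neg a) = fhat neg a := by
  refine (subset_clOp _ _).antisymm' fun x hx => ?_
  by_contra hax
  obtain ⟨z, htz, hz⟩ := hx _ ((topPt_Iic_fiLt_iff hneg1).2 hax)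
  exact (topPt_Iic_fiLt_iff hneg1).1 htz hz

theorem fhat_finset_sup (hneg : IsDuallySelfAdjoint neg) (hneg1 : neg ⊤ = ⊥) {ι : Type*}
    (s : Finset ι) (f : ι → L) :
    fhat neg (s.sup f) = clOp (fiLt neg) (⋃ i ∈ s, fhat neg (f i)) := by
  refine subset_antisymm (fun x hx y hyx => ?_) ?_
  · have : s.sup f ∉ y.1.2 := fun h => fiLt_iff.1 hyx _ h hx
    obtain ⟨i, hi, hfi⟩ : ∃ i ∈ s, f i ∉ y.1.2 := by
      by_contra! h
      exact this (y.isIdl.finset_sup_mem h)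
    obtain ⟨z, hyz, hz⟩ := exists_fiLt_mem_fhat hneg hfi
    exact ⟨z, hyz, mem_biUnion hi hz⟩
  · rw [← clOp_fhat hneg1 (s.sup f)]
    exact clOp_mono _ (iUnion₂_subset fun i hi x hx => x.isFilt.mem_of_le hx (Finset.le_sup hi))

theorem fhat_sup (hneg : IsDuallySelfAdjoint neg) (hneg1 : neg ⊤ = ⊥) (a b : L) :
    fhat neg (a ⊔ b) = clOp (fiLt neg) (fhat neg a ∪ fhat neg b) := by
  classical
  simpa using fhat_finset_sup hneg hneg1 {a, b} id

theorem fhat_bot (hneg : IsDuallySelfAdjoint neg) (hneg1 : neg ⊤ = ⊥) :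
    fhat neg (⊥ : L) = clOp (fiLt neg) ∅ := by
  simpa using fhat_finset_sup hneg hneg1 (∅ : Finset L) id

theorem fhat_neg (hneg : IsDuallySelfAdjoint neg) (a : L) :
    fhat neg (neg a) = ngOp (fiLt neg) (fhat neg a) := by
  refine subset_antisymm (fun x hx y hyx hy => fiLt_iff.1 hyx _ (y.neg_mem hy) hx) fun x hx => ?_
  by_contra hax
  exact hx _ ((principalPt_fiLt_iff hneg).2 hax) (le_refl a)

end CanonicalFrame

section ModalOperators

variable {L : Type*} [Lattice L] [BoundedOrder L] {neg : L → L} {box : InfTopHom L L}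
  {dia : SupBotHom L L}

def rSucc (hInt : ∀ a : L, dia (neg a) ≤ neg (box a)) (x : FIX neg) : FIX neg :=
  ⟨(box ⁻¹' x.1.1, dia ⁻¹' x.1.2), x.isFilt.preimage box, x.isIdl.preimage dia,
    fun a ha => x.isIdl.mem_of_le (x.neg_mem ha) (hInt a)⟩

theorem fiR2_rSucc (hInt : ∀ a : L, dia (neg a) ≤ neg (box a)) (x : FIX neg) :
    fiR2 neg box dia x (rSucc hInt x) :=
  fun _ => ⟨id, id⟩

theorem fhat_box (hInt : ∀ a : L, dia (neg a) ≤ neg (box a)) (a : L) :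
    fhat neg (box a) = boxOp (fiR2 neg box dia) (fhat neg a) :=
  subset_antisymm (fun _ hx _ hxy => (hxy a).1 hx) fun x hx => hx _ (fiR2_rSucc hInt x)

theorem fhat_dia (hneg : IsDuallySelfAdjoint neg) (hneg1 : neg ⊤ = ⊥)
    (hInt : ∀ a : L, dia (neg a) ≤ neg (box a)) (a : L) :
    fhat neg (dia a) = diaOp (fiLt neg) (fiR2 neg box dia) (fhat neg a) := by
  refine subset_antisymm (fun x hx x' hx'x => ?_) fun x hx => ?_
  · have hy : a ∉ (rSucc hInt x').1.2 := fun h => fiLt_iff.1 hx'x _ h hx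
    exact ⟨_, principalPt hneg a, fiR2_rSucc hInt x', (fiLt_principalPt_iff hneg).2 hy, le_refl a⟩
  · rw [← clOp_fhat hneg1 (dia a)]
    intro y hyx
    obtain ⟨y', z, hyy', hy'z, hz⟩ := hx y hyx
    exact exists_fiLt_mem_fhat hneg fun h => fiLt_iff.1 hy'z a ((hyy' a).2 h) hz

theorem isModalFrame_fiLt (hneg1 : neg ⊤ = ⊥) (hInt : ∀ a : L, dia (neg a) ≤ neg (box a)) :
    IsModalFrame (fiLt neg) (fiR2 neg box dia) := by
  intro x y z hxy hzy
  refine ⟨topPt hneg1 _ (z.isIdl.lowerClosure_image (OrderHomClass.mono box)), ?_, ?_⟩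
  · refine fiLt_iff.2 ?_
    rintro c ⟨b, hb, hcb⟩ hc
    exact fiLt_iff.1 hzy b hb ((hxy b).1 (x.isFilt.mem_of_le hc hcb))
  · refine fun x'' hx'' => ⟨rSucc hInt x'', fiR2_rSucc hInt x'', fiLt_iff.2 ?_⟩
    exact fun b hb hbx => fiLt_iff.1 hx'' (box b) ⟨b, hb, le_rfl⟩ hbx

def diaImagePt (dia : SupBotHom L L) (hneg : IsDuallySelfAdjoint neg) (z : FIX neg) : FIX neg :=
  negPt hneg _ (z.isFilt.upperClosure_image (OrderHomClass.mono dia))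

theorem rSucc_fiLt_of_fiLt_diaImagePt (hneg : IsDuallySelfAdjoint neg)
    (hInt : ∀ a : L, dia (neg a) ≤ neg (box a)) {x z : FIX neg}
    (h : fiLt neg x (diaImagePt dia hneg z)) : fiLt neg (rSucc hInt x) z :=
  fiLt_iff.2 fun c hc hcz => fiLt_iff.1 h (dia c) hc ⟨c, hcz, le_rfl⟩

theorem isAdditiveFrame_fiLt (hneg : IsDuallySelfAdjoint neg)
    (hInt : ∀ a : L, dia (neg a) ≤ neg (box a)) :
    IsAdditiveFrame (fiLt neg) (fiR2 neg box dia) := by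
  intro x y z hxy hyz
  refine ⟨diaImagePt dia hneg z, fiLt_iff.2 ?_, fun x'' hx'' =>
    ⟨rSucc hInt x'', fiR2_rSucc hInt x'', rSucc_fiLt_of_fiLt_diaImagePt hneg hInt hx''⟩⟩
  rintro c hc ⟨b, hb, hbc⟩
  exact fiLt_iff.1 hyz b ((hxy b).2 (x.isIdl.mem_of_le hc hbc)) hb

theorem isNegativeFrame_fiLt (hneg : IsDuallySelfAdjoint neg)
    (hInt : ∀ a : L, dia (neg a) ≤ neg (box a)) (hNeg : ∀ a : L, neg (dia a) ≤ box (neg a)) :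
    IsNegativeFrame (fiLt neg) (fiR2 neg box dia) (fiR2 neg box dia) := by
  intro x y z hxy hzy
  refine ⟨diaImagePt dia hneg z, fiLt_iff.2 ?_, fun x'' hx'' =>
    ⟨rSucc hInt x'', fiR2_rSucc hInt x'', rSucc_fiLt_of_fiLt_diaImagePt hneg hInt hx''⟩⟩
  rintro d ⟨c, ⟨b, hb, hbc⟩, hdc⟩ hd
  have hbox : box (neg b) ∈ x.1.1 :=
    x.isFilt.mem_of_le hd (hdc.trans ((hneg.antitone hbc).trans (hNeg b)))
  exact fiLt_iff.1 hzy (neg b) (z.neg_mem hb) ((hxy (neg b)).1 hbox)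

end ModalOperators

section Topology

open TopologicalSpace

theorem isCompact_of_forall_specializes {X : Type*} [TopologicalSpace X] {s : Set X} {p : X}
    (hp : p ∈ s) (h : ∀ x ∈ s, x ⤳ p) : IsCompact s := by
  refine isCompact_of_finite_subcover fun U hU hsU => ?_
  obtain ⟨i, hi⟩ := mem_iUnion.1 (hsU hp)
  exact ⟨{i}, fun x hx => by simpa using (h x hx).mem_open (hU i) hi⟩

variable {L : Type*} [Lattice L] [BoundedOrder L] {neg : L → L}

local instance fhatTopology : TopologicalSpace (FIX neg) :=
  generateFrom (range (fhat neg))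

theorem isTopologicalBasis_range_fhat : IsTopologicalBasis (range (fhat neg)) where
  exists_subset_inter := by
    rintro _ ⟨a, rfl⟩ _ ⟨b, rfl⟩ x hx
    exact ⟨fhat neg (a ⊓ b), mem_range_self _, (fhat_inf a b).symm ▸ hx, (fhat_inf a b).le⟩
  sUnion_eq := sUnion_eq_univ_iff.2 fun x => ⟨_, mem_range_self ⊤, x.isFilt.top_mem⟩
  eq_generateFrom := rfl

theorem isCompact_fhat (hneg : IsDuallySelfAdjoint neg) (a : L) : IsCompact (fhat neg a) := by
  refine isCompact_of_forall_specializes ((principalPt_mem_fhat_iff hneg).2 le_rfl) fun x hx => ?_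
  refine specializes_iff_forall_open.2 fun U hU hpU => ?_
  obtain ⟨_, ⟨b, rfl⟩, hpb, hbU⟩ := isTopologicalBasis_range_fhat.isOpen_iff.1 hU _ hpU
  exact hbU ((fhat_subset_fhat_iff hneg).2 hpb hx)

theorem exists_fhat_eq_iff (hneg : IsDuallySelfAdjoint neg) (hneg1 : neg ⊤ = ⊥)
    (A : Set (FIX neg)) :
    (∃ a : L, fhat neg a = A) ↔ clOp (fiLt neg) A = A ∧ IsCompact A ∧ IsOpen A := by
  rw [isCompact_open_iff_eq_finite_iUnion_of_isTopologicalBasis _ isTopologicalBasis_range_fhat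
    (isCompact_fhat hneg)]
  constructor
  · rintro ⟨a, rfl⟩
    exact ⟨clOp_fhat hneg1 a, {a}, finite_singleton a, by simp⟩
  · rintro ⟨hA, s, hs, rfl⟩
    refine ⟨hs.toFinset.sup id, ?_⟩
    simpa [fhat_finset_sup hneg hneg1] using hA

end Topology

theorem stmt_18 {L : Type*} [Lattice L] [BoundedOrder L] (neg Box Dia : L → L)
    (hdsa : ∀ a b : L, a ≤ neg b → b ≤ neg a) (hneg1 : neg ⊤ = ⊥)
    (hBoxMul : ∀ a b : L, Box (a ⊓ b) = Box a ⊓ Box b) (hBoxTop : Box ⊤ = ⊤)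
    (hDiaAdd : ∀ a b : L, Dia (a ⊔ b) = Dia a ⊔ Dia b) (hDiaBot : Dia ⊥ = ⊥)
    (hInt : ∀ a : L, Dia (neg a) ≤ neg (Box a))
    (R Q : FIX neg → FIX neg → Prop)
    (hR : R = fiR2 neg Box Dia) (hQ : Q = R) :
    (IsModalFrame (fiLt neg) R ∧ IsAdditiveFrame (fiLt neg) Q ∧ Q = R ∧
      PseudoSymm (fiLt neg)) ∧
    (Function.Injective (fhat neg) ∧
     (∀ a : L, clOp (fiLt neg) (fhat neg a) = fhat neg a) ∧
     (∀ a b : L, fhat neg (a ⊓ b) = fhat neg a ∩ fhat neg b) ∧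
     (∀ a b : L, fhat neg (a ⊔ b) = clOp (fiLt neg) (fhat neg a ∪ fhat neg b)) ∧
     fhat neg (⊤ : L) = (Set.univ : Set (FIX neg)) ∧
     fhat neg (⊥ : L) = clOp (fiLt neg) (∅ : Set (FIX neg)) ∧
     (∀ a : L, fhat neg (neg a) = ngOp (fiLt neg) (fhat neg a)) ∧
     (∀ a : L, fhat neg (Box a) = boxOp R (fhat neg a)) ∧
     (∀ a : L, fhat neg (Dia a) = diaOp (fiLt neg) Q (fhat neg a)) ∧
     (∀ A : Set (FIX neg),
       (∃ a : L, fhat neg a = A) ↔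
         (clOp (fiLt neg) A = A ∧
          @IsCompact _ (TopologicalSpace.generateFrom (Set.range (fhat neg))) A ∧
          @IsOpen _ (TopologicalSpace.generateFrom (Set.range (fhat neg))) A))) ∧
    ((∀ a : L, a ⊓ neg a = ⊥) → PseudoRefl (fiLt neg)) ∧
    ((∀ a : L, neg (Dia a) ≤ Box (neg a)) → IsNegativeFrame (fiLt neg) R Q) := by
  subst hQ hR
  let box : InfTopHom L L := ⟨⟨Box, hBoxMul⟩, hBoxTop⟩
  let dia : SupBotHom L L := ⟨⟨Dia, hDiaAdd⟩, hDiaBot⟩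
  have hInt' : ∀ a : L, dia (neg a) ≤ neg (box a) := hInt
  exact ⟨⟨isModalFrame_fiLt hneg1 hInt', isAdditiveFrame_fiLt hdsa hInt', rfl,
      pseudoSymm_fiLt hdsa⟩,
    ⟨fhat_injective hdsa, clOp_fhat hneg1, fhat_inf, fhat_sup hdsa hneg1, fhat_top,
      fhat_bot hdsa hneg1, fhat_neg hdsa, fhat_box hInt', fhat_dia hdsa hneg1 hInt',
      exists_fhat_eq_iff hdsa hneg1⟩,
    pseudoRefl_fiLt hdsa, isNegativeFrame_fiLt hdsa hInt'⟩
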